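/- Equivalent exponential form of the recursion: for all n ∈ ℤ, ℓ_n(x+y) = ℓ_n(x) · e^{ℓ_{n+1}(x+y) − ℓ_{n+1}(x)}, where e^X = Σ_{i≥0} X^i / i! and ℓ_k(x+y) := e^{y d/dx} ℓ_k(x). -/

import Mathlib

open Finsupp Polynomial
noncomputable section
abbrev CL := AddMonoidAlgebra ℂ (ℤ →₀ ℂ)
def ellpow (n : ℤ) (r : ℂ) : CL := AddMonoidAlgebra.single (Finsupp.single n r) 1
def ell (n : ℤ) : CL := ellpow n 1
def eexp (n : ℤ) : ℤ →₀ ℂ :=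
  if 0 < n then -(Finset.Ico (0:ℤ) n).sum (fun i => Finsupp.single i 1)
  else if n < 0 then (Finset.Ico n (0:ℤ)).sum (fun i => Finsupp.single i 1)
  else 0
def dmon (μ : ℤ →₀ ℂ) : CL :=
  μ.sum fun j c => c • AddMonoidAlgebra.single (μ + eexp j - Finsupp.single j 1) (1 : ℂ)
def ddx : CL →ₗ[ℂ] CL :=
  (Finsupp.lsum ℂ fun μ => LinearMap.toSpanSingleton ℂ CL (dmon μ)) ∘ₗ
    (AddMonoidAlgebra.coeffLinearEquiv ℂ).toLinearMap

lemma single_mul_single' (a b : ℤ →₀ ℂ) :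
    (AddMonoidAlgebra.single a (1:ℂ)) * AddMonoidAlgebra.single b 1
      = AddMonoidAlgebra.single (a+b) 1 := by
  rw [AddMonoidAlgebra.single_mul_single, one_mul]

lemma ddx_single (μ : ℤ →₀ ℂ) (c : ℂ) :
    ddx (AddMonoidAlgebra.single μ c) = c • dmon μ := by
  show Finsupp.lsum ℂ (fun μ => LinearMap.toSpanSingleton ℂ CL (dmon μ))
    (AddMonoidAlgebra.single μ c).coeff = _
  rw [AddMonoidAlgebra.coeff_single, Finsupp.lsum_single]
  simp [LinearMap.toSpanSingleton]

lemma dmon_add (μ ν : ℤ →₀ ℂ) :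
    dmon (μ + ν) = AddMonoidAlgebra.single μ 1 * dmon ν
      + AddMonoidAlgebra.single ν 1 * dmon μ := by
  unfold dmon
  rw [Finsupp.sum_add_index' (f := μ) (g := ν)
    (h := fun j c => c • AddMonoidAlgebra.single (μ + ν + eexp j - Finsupp.single j 1) (1:ℂ))
    (fun i => zero_smul ℂ _) (fun i b c => add_smul b c _)]
  rw [Finsupp.mul_sum, Finsupp.mul_sum, add_comm]
  congr 1
  · refine Finsupp.sum_congr fun j _ => ?_
    rw [mul_smul_comm, single_mul_single']
    congr 2
    abel
  · refine Finsupp.sum_congr fun j _ => ?_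
    rw [mul_smul_comm, single_mul_single']
    congr 2
    abel

lemma ddx_mul (a b : CL) : ddx (a * b) = a * ddx b + b * ddx a := by
  induction a using AddMonoidAlgebra.induction_linear with
  | zero => simp
  | add f g hf hg =>
      rw [add_mul, map_add, hf, hg, map_add, mul_add, add_mul]
      ring
  | single μ c =>
      induction b using AddMonoidAlgebra.induction_linear with
      | zero => simp
      | add f g hf hg =>
          rw [mul_add, map_add, hf, hg, map_add, mul_add, add_mul]
          ring
      | single ν d =>
          show ddx (AddMonoidAlgebra.single μ c * AddMonoidAlgebra.single ν d) = _
          rw [AddMonoidAlgebra.single_mul_single, ddx_single, dmon_add]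
          show _ = AddMonoidAlgebra.single μ c • ddx (AddMonoidAlgebra.single ν d)
            + AddMonoidAlgebra.single ν d • ddx (AddMonoidAlgebra.single μ c)
          rw [ddx_single, ddx_single, smul_add]
          have h1 : AddMonoidAlgebra.single μ c = c • AddMonoidAlgebra.single μ (1:ℂ) := by
            rw [AddMonoidAlgebra.smul_single', mul_one]
          have h2 : AddMonoidAlgebra.single ν d = d • AddMonoidAlgebra.single ν (1:ℂ) := by
            rw [AddMonoidAlgebra.smul_single', mul_one]
          rw [h1, h2]
          simp only [smul_eq_mul, smul_mul_assoc, smul_smul, mul_smul_comm]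
          rw [mul_comm d c]

lemma ddx_mul' (a b : CL) : ddx (a * b) = ddx a * b + a * ddx b := by
  rw [ddx_mul]; ring

-- iterated Leibniz, mirroring Polynomial.iterate_derivative_mul
lemma ddx_pow_mul (p q : CL) (n : ℕ) :
    (ddx ^ n) (p * q) = ∑ k ∈ Finset.range (n+1),
      n.choose k • ((ddx ^ (n - k)) p * (ddx ^ k) q) := by
  open Finset in
  induction n with
  | zero => simp
  | succ n IH =>
    have hit : ∀ (m : ℕ) (x : CL), (ddx ^ (m+1)) x = ddx ((ddx ^ m) x) := by
      intro m x; rw [pow_succ', Module.End.mul_apply]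
    calc
      (ddx ^ (n + 1)) (p * q) =
          ddx (∑ k ∈ range (n+1),
              n.choose k • ((ddx ^ (n - k)) p * (ddx ^ k) q)) := by
        rw [hit, IH]
      _ = (∑ k ∈ range (n+1),
            n.choose k • ((ddx ^ (n - k + 1)) p * (ddx ^ k) q)) +
          ∑ k ∈ range (n+1),
            n.choose k • ((ddx ^ (n - k)) p * (ddx ^ (k + 1)) q) := by
        rw [map_sum]
        simp_rw [map_nsmul, ddx_mul', hit, smul_add, sum_add_distrib]
      _ = (∑ k ∈ range (n+1),
                n.choose (k+1) • ((ddx ^ (n - k)) p * (ddx ^ (k + 1)) q)) +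
              1 • ((ddx ^ (n + 1)) p * (ddx ^ 0) q) +
            ∑ k ∈ range (n+1), n.choose k • ((ddx ^ (n - k)) p * (ddx ^ (k + 1)) q) :=
        ?_
      _ = ((∑ k ∈ range (n+1), n.choose k • ((ddx ^ (n - k)) p * (ddx ^ (k + 1)) q)) +
              ∑ k ∈ range (n+1),
                n.choose (k+1) • ((ddx ^ (n - k)) p * (ddx ^ (k + 1)) q)) +
            1 • ((ddx ^ (n + 1)) p * (ddx ^ 0) q) := by
        rw [add_comm, add_assoc]
      _ = (∑ i ∈ range (n+1),
              (n + 1).choose (i + 1) • ((ddx ^ (n + 1 - (i + 1))) p * (ddx ^ (i + 1)) q)) +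
            1 • ((ddx ^ (n + 1)) p * (ddx ^ 0) q) := by
        simp_rw [Nat.choose_succ_succ, Nat.succ_sub_succ, add_smul, sum_add_distrib]
      _ = ∑ k ∈ range (n+1+1),
            (n+1).choose k • ((ddx ^ (n + 1 - k)) p * (ddx ^ k) q) := by
        rw [sum_range_succ' _ (n+1), Nat.choose_zero_right, tsub_zero]
    congr
    refine (sum_range_succ' _ _).trans (congr_arg₂ (· + ·) ?_ ?_)
    · rw [sum_range_succ, Nat.choose_succ_self, zero_smul, add_zero]
      refine sum_congr rfl fun k hk => ?_
      rw [mem_range] at hk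
      congr
      omega
    · rw [Nat.choose_zero_right, tsub_zero]

def expD (a : CL) : PowerSeries CL :=
  PowerSeries.mk fun k => (k.factorial : ℂ)⁻¹ • (ddx ^ k) a

lemma coeff_expD (a : CL) (k : ℕ) :
    PowerSeries.coeff (R := CL) k (expD a) = (k.factorial : ℂ)⁻¹ • (ddx ^ k) a := by
  simp [expD]

lemma expD_mul (a b : CL) : expD (a * b) = expD a * expD b := by
  refine PowerSeries.ext fun k => ?_
  rw [PowerSeries.coeff_mul, Finset.Nat.sum_antidiagonal_eq_sum_range_succ_mk]
  simp only [coeff_expD]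
  rw [ddx_pow_mul, Finset.smul_sum]
  refine Eq.trans (Finset.sum_range_reflect
    (fun i => ((k.factorial : ℂ)⁻¹ • (k.choose i • ((ddx ^ (k - i)) a * (ddx ^ i) b)) : CL)) (k+1)).symm ?_
  refine Finset.sum_congr rfl fun j hj => ?_
  rw [Finset.mem_range] at hj
  have hjk : j ≤ k := by omega
  have h1 : k + 1 - 1 - j = k - j := by omega
  rw [h1, Nat.sub_sub_self hjk, Nat.choose_symm hjk]
  rw [mul_smul_comm, smul_mul_assoc, smul_smul]
  rw [← Nat.cast_smul_eq_nsmul ℂ, smul_smul]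
  congr 1
  rw [Nat.cast_choose ℂ hjk]
  have h2 : (k.factorial : ℂ) ≠ 0 := Nat.cast_ne_zero.2 k.factorial_ne_zero
  have h3 : (j.factorial : ℂ) ≠ 0 := Nat.cast_ne_zero.2 j.factorial_ne_zero
  have h4 : ((k-j).factorial : ℂ) ≠ 0 := Nat.cast_ne_zero.2 (k-j).factorial_ne_zero
  field_simp

lemma constantCoeff_expD (a : CL) : PowerSeries.constantCoeff (R := CL) (expD a) = a := by
  have := coeff_expD a 0
  rw [PowerSeries.coeff_zero_eq_constantCoeff] at this
  simpa using this

open PowerSeries in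
lemma D_expD (a : CL) : d⁄dX CL (expD a) = expD (ddx a) := by
  refine PowerSeries.ext fun k => ?_
  rw [PowerSeries.coeff_derivative, coeff_expD, coeff_expD, pow_succ, Module.End.mul_apply]
  rw [smul_mul_assoc]
  have h3 : ((k:ℂ)+1) ≠ 0 := Nat.cast_add_one_ne_zero k
  have : ((ddx ^ k) (ddx a)) * ((k:CL) + 1) = ((k+1 : ℕ)) • ((ddx ^ k) (ddx a)) := by
    rw [nsmul_eq_mul, mul_comm]
    push_cast
    ring
  rw [this, ← Nat.cast_smul_eq_nsmul ℂ, smul_smul]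
  have hsc : (((k+1).factorial : ℂ))⁻¹ * (((k+1:ℕ)):ℂ) = (k.factorial : ℂ)⁻¹ := by
    have h2 : (k.factorial : ℂ) ≠ 0 := Nat.cast_ne_zero.2 k.factorial_ne_zero
    rw [Nat.factorial_succ]
    push_cast
    field_simp
  rw [hsc]

def logOnePlus (Z : PowerSeries CL) : PowerSeries CL :=
  PowerSeries.mk fun k =>
    ∑ i ∈ Finset.Icc 1 k, (((-1 : ℂ) ^ (i - 1) / i) • PowerSeries.coeff (R := CL) k (Z ^ i))

def expOf (Z : PowerSeries CL) : PowerSeries CL :=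
  PowerSeries.mk fun k =>
    ∑ i ∈ Finset.range (k + 1), ((i.factorial : ℂ)⁻¹ • PowerSeries.coeff (R := CL) k (Z ^ i))

lemma eexp_succ (n : ℤ) : eexp n = Finsupp.single n 1 + eexp (n+1) := by
  unfold eexp
  rcases lt_trichotomy n 0 with h|h|h
  · rcases eq_or_lt_of_le (by omega : n + 1 ≤ 0) with h1|h1
    · rw [if_neg (by omega), if_pos h, if_neg (by omega), if_neg (by omega)]
      have : Finset.Ico n (0:ℤ) = {n} := by ext x; simp; omega
      rw [this, Finset.sum_singleton, add_zero]
    · rw [if_neg (by omega), if_pos h, if_neg (by omega), if_pos h1]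
      have hins : Finset.Ico n (0:ℤ) = insert n (Finset.Ico (n+1) (0:ℤ)) := by
        ext x; simp; omega
      rw [hins, Finset.sum_insert (by simp)]
  · subst h
    rw [if_neg (by omega), if_neg (by omega), if_pos (by omega)]
    have : Finset.Ico (0:ℤ) (0+1) = {0} := by ext x; simp; omega
    rw [this, Finset.sum_singleton]
    abel
  · rw [if_pos h, if_pos (by omega)]
    have hins : Finset.Ico (0:ℤ) (n+1) = insert n (Finset.Ico (0:ℤ) n) := by
      ext x; simp; omega
    rw [hins, Finset.sum_insert (by simp)]
    abel

lemma ddx_ell (n : ℤ) : ddx (ell n) = ell n * ddx (ell (n+1)) := by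
  show ddx (AddMonoidAlgebra.single (Finsupp.single n 1) 1)
    = _ * ddx (AddMonoidAlgebra.single (Finsupp.single (n+1) 1) 1)
  rw [ddx_single, ddx_single, one_smul, one_smul]
  unfold dmon
  rw [Finsupp.sum_single_index (by simp), Finsupp.sum_single_index (by simp), one_smul, one_smul]
  show _ = AddMonoidAlgebra.single (Finsupp.single n 1) 1 * _
  rw [add_sub_cancel_left, add_sub_cancel_left, single_mul_single']
  rw [eexp_succ n]

lemma coeff_pow_zero_of_lt {Z : PowerSeries CL} (hZ : PowerSeries.constantCoeff (R := CL) Z = 0)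
    {k i : ℕ} (h : k < i) : PowerSeries.coeff (R := CL) k (Z ^ i) = 0 := by
  have hX : (PowerSeries.X : PowerSeries CL) ∣ Z := PowerSeries.X_dvd_iff.2 hZ
  have : (PowerSeries.X : PowerSeries CL) ^ i ∣ Z ^ i := pow_dvd_pow_of_dvd hX i
  exact PowerSeries.X_pow_dvd_iff.1 this k h

lemma coeff_expOf {Z : PowerSeries CL} (hZ : PowerSeries.constantCoeff (R := CL) Z = 0)
    (k N : ℕ) (hN : k < N) :
    PowerSeries.coeff (R := CL) k (expOf Z)
      = ∑ i ∈ Finset.range N, (i.factorial : ℂ)⁻¹ • PowerSeries.coeff (R := CL) k (Z ^ i) := by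
  rw [expOf, PowerSeries.coeff_mk]
  refine Finset.sum_subset (by intro x hx; simp at hx ⊢; omega) ?_
  intro i hi hik
  simp only [Finset.mem_range, not_lt] at hik
  rw [coeff_pow_zero_of_lt hZ (by omega), smul_zero]

lemma coeff_mul_congr (A A' B : PowerSeries CL) (k : ℕ)
    (h : ∀ j ≤ k, PowerSeries.coeff (R := CL) j A = PowerSeries.coeff (R := CL) j A') :
    PowerSeries.coeff (R := CL) k (A * B) = PowerSeries.coeff (R := CL) k (A' * B) := by
  rw [PowerSeries.coeff_mul, PowerSeries.coeff_mul]
  refine Finset.sum_congr rfl fun p hp => ?_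
  rw [Finset.HasAntidiagonal.mem_antidiagonal] at hp
  rw [h p.1 (by omega)]

open PowerSeries in
lemma D_expOf (Z : PowerSeries CL) (hZ : PowerSeries.constantCoeff (R := CL) Z = 0) :
    d⁄dX CL (expOf Z) = expOf Z * d⁄dX CL Z := by
  refine PowerSeries.ext fun k => ?_
  rw [PowerSeries.coeff_derivative]
  -- replace expOf Z by the genuine partial sum S on the RHS
  set S : PowerSeries CL := ∑ i ∈ Finset.range (k+1), (i.factorial : ℂ)⁻¹ • Z ^ i with hS
  have hSc : ∀ j ≤ k, PowerSeries.coeff (R := CL) j (expOf Z) = PowerSeries.coeff (R := CL) j S := by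
    intro j hj
    rw [coeff_expOf hZ j (k+1) (by omega), hS, map_sum]
    refine Finset.sum_congr rfl fun i _ => ?_
    rw [PowerSeries.coeff_smul]
  rw [coeff_mul_congr _ S _ k hSc]
  have hmul : S * d⁄dX CL Z = ∑ i ∈ Finset.range (k+1),
      ((i.factorial : ℂ)⁻¹ * (((i:ℂ)+1))⁻¹) • d⁄dX CL (Z ^ (i+1)) := by
    rw [hS, Finset.sum_mul]
    refine Finset.sum_congr rfl fun i _ => ?_
    have hleib : d⁄dX CL (Z ^ (i+1)) = (i+1) • (Z ^ i * d⁄dX CL Z) := by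
      rw [Derivation.leibniz_pow]
      simp [smul_eq_mul, Nat.add_sub_cancel]
    rw [hleib, ← Nat.cast_smul_eq_nsmul ℂ, smul_mul_assoc, smul_smul]
    congr 1
    have h3 : ((i:ℂ)+1) ≠ 0 := Nat.cast_add_one_ne_zero i
    have h2 : (i.factorial : ℂ) ≠ 0 := Nat.cast_ne_zero.2 i.factorial_ne_zero
    push_cast
    field_simp
  rw [hmul, map_sum]
  -- LHS: coeff (k+1) (expOf Z) * (k+1)
  rw [coeff_expOf hZ (k+1) (k+2) (by omega)]
  rw [Finset.sum_range_succ' (fun i => (i.factorial : ℂ)⁻¹ • PowerSeries.coeff (R := CL) (k+1) (Z ^ i)) (k+1)]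
  rw [pow_zero, PowerSeries.coeff_one, if_neg (by omega), smul_zero, add_zero]
  rw [Finset.sum_mul]
  refine Finset.sum_congr rfl fun i _ => ?_
  rw [PowerSeries.coeff_smul, PowerSeries.coeff_derivative, smul_mul_assoc]
  congr 1
  rw [Nat.factorial_succ]
  have h2 : (i.factorial : ℂ) ≠ 0 := Nat.cast_ne_zero.2 i.factorial_ne_zero
  have h3 : ((i:ℂ)+1) ≠ 0 := Nat.cast_add_one_ne_zero i
  push_cast
  rw [mul_inv]
  ring

open PowerSeries in
lemma ode_unique (F G g : PowerSeries CL) (hF : d⁄dX CL F = F * g) (hG : d⁄dX CL G = G * g)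
    (h0 : PowerSeries.constantCoeff (R := CL) F = PowerSeries.constantCoeff (R := CL) G) : F = G := by
  refine PowerSeries.ext fun k => ?_
  induction k using Nat.strong_induction_on with
  | _ k ih =>
    match k with
    | 0 => simpa [PowerSeries.coeff_zero_eq_constantCoeff] using h0
    | (k+1) =>
      have hF' := congrArg (PowerSeries.coeff (R := CL) k) hF
      have hG' := congrArg (PowerSeries.coeff (R := CL) k) hG
      rw [PowerSeries.coeff_derivative] at hF' hG'
      have hfg : PowerSeries.coeff (R := CL) k (F * g) = PowerSeries.coeff (R := CL) k (G * g) := by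
        rw [PowerSeries.coeff_mul, PowerSeries.coeff_mul]
        refine Finset.sum_congr rfl fun p hp => ?_
        rw [Finset.HasAntidiagonal.mem_antidiagonal] at hp
        rw [ih p.1 (by omega)]
      have key : PowerSeries.coeff (R := CL) (k+1) F * ((k:CL)+1)
          = PowerSeries.coeff (R := CL) (k+1) G * ((k:CL)+1) := by
        rw [hF', hG', hfg]
      have hcast : ∀ x : CL, x * ((k:CL)+1) = ((k:ℂ)+1) • x := by
        intro x
        rw [show ((k:ℂ)+1) = ((k+1:ℕ):ℂ) by push_cast; ring, Nat.cast_smul_eq_nsmul,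
          nsmul_eq_mul, show ((k:CL)+1) = ((k+1:ℕ):CL) by push_cast; ring, mul_comm]
      rw [hcast, hcast] at key
      have h3 : ((k:ℂ)+1) ≠ 0 := Nat.cast_add_one_ne_zero k
      exact smul_right_injective CL h3 key

open PowerSeries in
/-- exponential form of the recursion: for all `n ∈ ℤ`,
`ℓ_n(x+y) = ℓ_n(x) ⬝ e^{ℓ_{n+1}(x+y) − ℓ_{n+1}(x)}`,
where `ℓ_k(x+y) := e^{y d/dx} ℓ_k(x)` in `C{[ℓ]}[[y]]`. -/
theorem main_recursion_exp_form (n : ℤ) :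
    expD (ell n) = PowerSeries.C (R := CL) (ell n) *
      expOf (expD (ell (n + 1)) - PowerSeries.C (R := CL) (ell (n + 1))) := by
  set g : PowerSeries CL := expD (ddx (ell (n+1))) with hg
  set Z : PowerSeries CL := expD (ell (n+1)) - PowerSeries.C (R := CL) (ell (n+1)) with hZdef
  have hZ0 : PowerSeries.constantCoeff (R := CL) Z = 0 := by
    rw [hZdef, map_sub, constantCoeff_expD]
    simp
  have hDZ : d⁄dX CL Z = g := by
    rw [hZdef, map_sub, D_expD, PowerSeries.derivative_C, sub_zero]
  have hF : d⁄dX CL (expD (ell n)) = expD (ell n) * g := by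
    rw [D_expD, ddx_ell, expD_mul]
  have hG : d⁄dX CL (PowerSeries.C (R := CL) (ell n) * expOf Z)
      = (PowerSeries.C (R := CL) (ell n) * expOf Z) * g := by
    rw [Derivation.leibniz, PowerSeries.derivative_C, smul_eq_mul, smul_eq_mul, mul_zero,
      add_zero, D_expOf Z hZ0, hDZ]
    ring
  have h0 : PowerSeries.constantCoeff (R := CL) (expD (ell n))
      = PowerSeries.constantCoeff (R := CL) (PowerSeries.C (R := CL) (ell n) * expOf Z) := by
    rw [constantCoeff_expD, map_mul]
    have : PowerSeries.constantCoeff (R := CL) (expOf Z) = 1 := by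
      rw [← PowerSeries.coeff_zero_eq_constantCoeff_apply, expOf, PowerSeries.coeff_mk]
      simp
    rw [this]
    simp
  exact ode_unique _ _ g hF hG h0
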